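/- For every natural number k ≥ 1, there is a Boolean function f on (4k+2)(3k+2) variables with sensitivity s(f) = 3k+2 and block sensitivity bs(f) = (3k+2)(2k+1). Concretely, f is defined on (3k+2) blocks of n = 4k+2 variables each by f = ⋁_{i=1}^{3k+2} g(x_{i,1},…,x_{i,n}), where g : {0,1}^n → {0,1} is the pattern function: g(x) = 1 iff there exists j ∈ [2k+1] such that x_{2j-1} = x_{2j} = 1 and, for all i ∈ [k], x_{2j+2i} = 0 and x_{2j-2i-1} = x_{2j-2i} = 0 (indices modulo n). -/

import Mathlib

/-!
At a 0-input of an OR of `m` copies of `g` on disjoint rows, the sensitive bits (blocks) split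
over the rows, each a 0-input of `g`; at a 1-input they all lie in one row, a 1-input of `g`.
So `s(f) ≤ max(m·s₀(g), s₁(g))` and `bs(f) ≤ max(m·bs₀(g), bs(g))`, with `m·s₀(g)` and
`m·bs₀(g)` attained at inputs with equal rows.

For the pattern function (and `m = 3k+2`), each pattern fixes only `3k+2` coordinates, which bounds
`s` and `bs` at 1-inputs. Two disjoint blocks never complete the same pattern, so `bs₀(g) = 2k+1`,
attained at `0` by the blocks `{2j-1, 2j}`. Finally `s₀(g) = 1`: two sensitive bits completing
different patterns `P_j`, `P_j'` would have to be `2j` and `2j'`, and then the odd positions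
`2j-1`, `2j'-1` cannot both avoid the zeros of the other pattern.
-/

section Defs

variable {ι : Type} [Fintype ι] [DecidableEq ι]

/-- `flipBit x i` is `x` with its `i`-th bit flipped. -/
def flipBit (x : ι → Bool) (i : ι) : ι → Bool :=
  Function.update x i (!x i)

/-- `flipBlock x B` is `x` with all bits indexed by `B` flipped. -/
def flipBlock (x : ι → Bool) (B : Finset ι) : ι → Bool :=
  fun j => if j ∈ B then !x j else x j

/-- The sensitivity of `f` at `x`: the number of `i` with `f (x^(i)) ≠ f x`. -/
def sensAt (f : (ι → Bool) → Bool) (x : ι → Bool) : ℕ :=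
  (Finset.univ.filter fun i => f (flipBit x i) ≠ f x).card

/-- The sensitivity `s(f) = max_x s(f,x)`. -/
def sens (f : (ι → Bool) → Bool) : ℕ :=
  Finset.univ.sup (sensAt f)

/-- The 0-sensitivity `s₀(f) = max_{x : f x = 0} s(f,x)`. -/
def sens0 (f : (ι → Bool) → Bool) : ℕ :=
  (Finset.univ.filter fun x => f x = false).sup (sensAt f)

/-- The 1-sensitivity `s₁(f) = max_{x : f x = 1} s(f,x)`. -/
def sens1 (f : (ι → Bool) → Bool) : ℕ :=
  (Finset.univ.filter fun x => f x = true).sup (sensAt f)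

/-- The block sensitivity of `f` at `x`: the largest `b` such that there are
`b` pairwise disjoint blocks on which flipping `x` changes the value of `f`. -/
noncomputable def bsAt (f : (ι → Bool) → Bool) (x : ι → Bool) : ℕ :=
  sSup {b : ℕ | ∃ Bl : Fin b → Finset ι,
    (Pairwise fun p q => Disjoint (Bl p) (Bl q)) ∧
    ∀ p, f (flipBlock x (Bl p)) ≠ f x}

/-- The block sensitivity `bs(f) = max_x bs(f,x)`. -/
noncomputable def bs (f : (ι → Bool) → Bool) : ℕ :=
  Finset.univ.sup (bsAt f)

/-- The 0-block-sensitivity `bs₀(f) = max_{x : f x = 0} bs(f,x)`. -/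
noncomputable def bs0 (f : (ι → Bool) → Bool) : ℕ :=
  (Finset.univ.filter fun x => f x = false).sup (bsAt f)

end Defs

/-- The coordinate of `{0,1}^{4k+2}` with (1-based) index `t`, taken modulo `4k+2`. -/
def pidx (k : ℕ) (t : ℤ) : Fin (4*k+2) :=
  ⟨(t % (4*(k:ℤ)+2)).toNat, by
    have h0 : (0:ℤ) < 4*(k:ℤ)+2 := by positivity
    have h1 := Int.emod_nonneg t (ne_of_gt h0)
    have h2 := Int.emod_lt_of_pos t h0
    omega⟩

/-- `x` satisfies the pattern `P_j`: `x_{2j-1} = x_{2j} = 1` and, for all `i ∈ [k]`,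
`x_{2j+2i} = 0` and `x_{2j-2i-1} = x_{2j-2i} = 0`, indices taken modulo `4k+2`. -/
def SatPat (k : ℕ) (j : ℤ) (x : Fin (4*k+2) → Bool) : Prop :=
  x (pidx k (2*j-1)) = true ∧ x (pidx k (2*j)) = true ∧
  ∀ i : ℤ, 1 ≤ i → i ≤ (k:ℤ) →
    x (pidx k (2*j+2*i)) = false ∧
    x (pidx k (2*j-2*i-1)) = false ∧
    x (pidx k (2*j-2*i)) = false

section BlockSensitivity

variable {ι : Type} [DecidableEq ι] (f : (ι → Bool) → Bool) (x : ι → Bool)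

theorem flipBlock_singleton (i : ι) : flipBlock x {i} = flipBit x i := by
  funext j
  by_cases h : j = i
  · subst h; simp [flipBlock, flipBit]
  · simp [flipBlock, flipBit, h]

theorem flipBit_apply_of_ne {i j : ι} (h : j ≠ i) : flipBit x i j = x j :=
  Function.update_of_ne h _ _

theorem flipBlock_false (B : Finset ι) :
    flipBlock (fun _ => false) B = fun i => decide (i ∈ B) := by
  funext i
  by_cases hi : i ∈ B <;> simp [flipBlock, hi]

theorem eq_or_eq_of_flipBit_apply_ne {i i' j : ι} (h : flipBit x i j ≠ flipBit x i' j) :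
    j = i ∨ j = i' := by
  by_contra! hj
  rw [flipBit_apply_of_ne x hj.1, flipBit_apply_of_ne x hj.2] at h
  exact h rfl

theorem eq_of_flipBlock_eq_of_disjoint {B B' : Finset ι} (hB : Disjoint B B') {i : ι} {c : Bool}
    (h : flipBlock x B i = c) (h' : flipBlock x B' i = c) : x i = c := by
  by_cases hi : i ∈ B
  · have hi' : i ∉ B' := Finset.disjoint_left.1 hB hi
    simp only [flipBlock, hi, hi', if_true, if_false] at h h'
    rw [h'] at h
    exact absurd h (Bool.not_ne_self c)
  · simpa [flipBlock, hi] using h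

theorem card_le_of_sensitive_blocks [Fintype ι] {b : ℕ} (B : Fin b → Finset ι)
    (hB : Pairwise fun p q => Disjoint (B p) (B q)) (hsens : ∀ p, f (flipBlock x (B p)) ≠ f x) :
    b ≤ Fintype.card ι := by
  have hnonempty : ∀ p, (B p).Nonempty := fun p =>
    Finset.nonempty_iff_ne_empty.2 fun h => hsens p (by
      congr 1; funext j; simp [flipBlock, h])
  choose pt hpt using hnonempty
  have hinj : Function.Injective pt := fun p q hpq => by
    by_contra hne
    exact Finset.disjoint_left.1 (hB hne) (hpt p) (hpq ▸ hpt q)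
  simpa using Fintype.card_le_of_injective pt hinj

theorem le_bsAt [Fintype ι] {α : Type*} (s : Finset α) (B : α → Finset ι)
    (hB : (s : Set α).PairwiseDisjoint B) (hsens : ∀ a ∈ s, f (flipBlock x (B a)) ≠ f x) :
    s.card ≤ bsAt f x := by
  refine le_csSup ⟨Fintype.card ι, ?_⟩ ⟨fun p => B (s.equivFin.symm p), ?_, ?_⟩
  · rintro b ⟨B', hB', hsens'⟩
    exact card_le_of_sensitive_blocks f x B' hB' hsens'
  · intro p q hpq
    exact hB (s.equivFin.symm p).2 (s.equivFin.symm q).2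
      (fun h => hpq (s.equivFin.symm.injective (Subtype.ext h)))
  · exact fun p => hsens _ (s.equivFin.symm p).2

theorem bsAt_le {n : ℕ} (h : ∀ (b : ℕ) (B : Fin b → Finset ι),
    (Pairwise fun p q => Disjoint (B p) (B q)) → (∀ p, f (flipBlock x (B p)) ≠ f x) → b ≤ n) :
    bsAt f x ≤ n :=
  csSup_le' fun _ ⟨B, hB, hsens⟩ => h _ B hB hsens

theorem exists_sensitive_blocks_card_eq_bsAt [Fintype ι] :
    ∃ B : Fin (bsAt f x) → Finset ι, (Pairwise fun p q => Disjoint (B p) (B q)) ∧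
      ∀ p, f (flipBlock x (B p)) ≠ f x :=
  Nat.sSup_mem (s := {b : ℕ | ∃ B : Fin b → Finset ι,
      (Pairwise fun p q => Disjoint (B p) (B q)) ∧ ∀ p, f (flipBlock x (B p)) ≠ f x})
    ⟨0, fun p => p.elim0, fun p => p.elim0, fun p => p.elim0⟩
    ⟨Fintype.card ι, fun _ ⟨B, hB, hsens⟩ => card_le_of_sensitive_blocks f x B hB hsens⟩

theorem sensAt_le_bsAt [Fintype ι] : sensAt f x ≤ bsAt f x := by
  refine le_bsAt f x _ (fun i => {i}) ?_ fun i hi => ?_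
  · exact fun i _ j _ hij => Finset.disjoint_singleton.2 hij
  · rw [flipBlock_singleton]; exact (Finset.mem_filter.1 hi).2

theorem bsAt_le_card_of_certificate [Fintype ι] (C : Finset ι)
    (hC : ∀ z, (∀ i ∈ C, z i = x i) → f z = f x) : bsAt f x ≤ C.card := by
  refine bsAt_le f x fun b B hB hsens => ?_
  have hmeet : ∀ p, ∃ i ∈ C, i ∈ B p := fun p => by
    by_contra! h
    exact hsens p (hC _ fun i hi => by simp [flipBlock, h i hi])
  choose pt hptC hptB using hmeet
  have hinj : Function.Injective fun p => (⟨pt p, hptC p⟩ : C) := fun p q hpq => by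
    by_contra hne
    have hpq' : pt p = pt q := congrArg Subtype.val hpq
    exact Finset.disjoint_left.1 (hB hne) (hptB p) (hpq' ▸ hptB q)
  simpa using Fintype.card_le_of_injective _ hinj

variable [Fintype ι] {f x}

theorem sensAt_le_sens : sensAt f x ≤ sens f := Finset.le_sup (Finset.mem_univ x)

theorem sensAt_le_sens0 (hx : f x = false) : sensAt f x ≤ sens0 f :=
  Finset.le_sup (Finset.mem_filter.2 ⟨Finset.mem_univ x, hx⟩)

theorem sensAt_le_sens1 (hx : f x = true) : sensAt f x ≤ sens1 f :=
  Finset.le_sup (Finset.mem_filter.2 ⟨Finset.mem_univ x, hx⟩)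

theorem bsAt_le_bs : bsAt f x ≤ bs f := Finset.le_sup (Finset.mem_univ x)

theorem bsAt_le_bs0 (hx : f x = false) : bsAt f x ≤ bs0 f :=
  Finset.le_sup (Finset.mem_filter.2 ⟨Finset.mem_univ x, hx⟩)

end BlockSensitivity

section OrComposition

variable {ι κ : Type}

def IsOrComposition (f : (ι × κ → Bool) → Bool) (g : (κ → Bool) → Bool) : Prop :=
  ∀ x, f x = true ↔ ∃ i, g (fun j => x (i, j)) = true

theorem IsOrComposition.eq_false_iff {f : (ι × κ → Bool) → Bool} {g : (κ → Bool) → Bool}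
    (hf : IsOrComposition f g) (x : ι × κ → Bool) :
    f x = false ↔ ∀ i, g (fun j => x (i, j)) = false := by
  simp only [← Bool.not_eq_true, hf x, not_exists]

variable [DecidableEq ι] [DecidableEq κ]

theorem flipBit_row_of_ne (x : ι × κ → Bool) {i i' : ι} (t : κ) (h : i' ≠ i) :
    (fun j => flipBit x (i, t) (i', j)) = fun j => x (i', j) := by
  funext j
  simp [flipBit, Function.update, h]

theorem flipBit_row_self (x : ι × κ → Bool) (i : ι) (t : κ) :
    (fun j => flipBit x (i, t) (i, j)) = flipBit (fun j => x (i, j)) t := by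
  funext j
  by_cases h : j = t
  · subst h; simp [flipBit]
  · simp [flipBit, Function.update, h]

theorem flipBlock_row [Fintype κ] (x : ι × κ → Bool) (i : ι) (B : Finset (ι × κ)) :
    (fun j => flipBlock x B (i, j)) =
      flipBlock (fun j => x (i, j)) (Finset.univ.filter fun j => (i, j) ∈ B) := by
  funext j
  simp [flipBlock]

theorem disjoint_filter_row [Fintype κ] {B B' : Finset (ι × κ)} (h : Disjoint B B') (i : ι) :
    Disjoint (Finset.univ.filter fun j => (i, j) ∈ B) (Finset.univ.filter fun j => (i, j) ∈ B') :=
  Finset.disjoint_left.2 fun _ h₁ h₂ =>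
    Finset.disjoint_left.1 h (Finset.mem_filter.1 h₁).2 (Finset.mem_filter.1 h₂).2

namespace IsOrComposition

variable [Fintype κ] {f : (ι × κ → Bool) → Bool} {g : (κ → Bool) → Bool}

theorem bsAt_le (hf : IsOrComposition f g) {x : ι × κ → Bool} {i : ι}
    (hi : g (fun j => x (i, j)) = true) : bsAt f x ≤ bsAt g (fun j => x (i, j)) := by
  have hx : f x = true := (hf x).2 ⟨i, hi⟩
  refine _root_.bsAt_le f x fun b B hB hsens => ?_
  have hrow : ∀ p, g (fun j => flipBlock x (B p) (i, j)) = false := fun p =>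
    (hf.eq_false_iff _).1 (by simpa [hx] using hsens p) i
  simpa using le_bsAt g _ Finset.univ (fun p => Finset.univ.filter fun j => (i, j) ∈ B p)
    (fun p _ q _ hpq => disjoint_filter_row (hB hpq) i)
    (fun p _ => by rw [← flipBlock_row, hrow, hi]; exact Bool.false_ne_true)

variable [Fintype ι]

theorem sensAt_eq_sum (hf : IsOrComposition f g) {x : ι × κ → Bool} (hx : f x = false) :
    sensAt f x = ∑ i, sensAt g (fun j => x (i, j)) := by
  have hrow := (hf.eq_false_iff x).1 hx
  have hflip : ∀ i t, f (flipBit x (i, t)) ≠ f x ↔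
      g (flipBit (fun j => x (i, j)) t) ≠ g (fun j => x (i, j)) := fun i t => by
    rw [hx, hrow i, ne_eq, Bool.not_eq_false, ne_eq, Bool.not_eq_false, hf]
    constructor
    · rintro ⟨i', hi'⟩
      by_cases h : i' = i
      · subst h; rwa [flipBit_row_self] at hi'
      · rw [flipBit_row_of_ne x t h, hrow] at hi'; exact absurd hi' Bool.false_ne_true
    · exact fun h => ⟨i, by rwa [flipBit_row_self]⟩
  simp only [sensAt, Finset.card_filter, Fintype.sum_prod_type, hflip]

theorem sensAt_le (hf : IsOrComposition f g) {x : ι × κ → Bool} {i : ι}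
    (hi : g (fun j => x (i, j)) = true) : sensAt f x ≤ sensAt g (fun j => x (i, j)) := by
  have hx : f x = true := (hf x).2 ⟨i, hi⟩
  have hrow : ∀ p ∈ Finset.univ.filter fun p => f (flipBit x p) ≠ f x,
      p.1 = i ∧ g (flipBit (fun j => x (i, j)) p.2) ≠ g (fun j => x (i, j)) := by
    rintro ⟨i', t⟩ hp
    rw [Finset.mem_filter, hx, ne_eq, Bool.not_eq_true, hf.eq_false_iff] at hp
    have hi' : i' = i := by
      by_contra h
      have := hp.2 i
      rw [flipBit_row_of_ne x t (Ne.symm h), hi] at this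
      simp at this
    subst hi'
    refine ⟨rfl, ?_⟩
    rw [hi, ← flipBit_row_self, hp.2]
    exact Bool.false_ne_true
  refine Finset.card_le_card_of_injOn Prod.snd (fun p hp => ?_) fun p hp q hq hpq => ?_
  · exact Finset.mem_filter.2 ⟨Finset.mem_univ _, (hrow p hp).2⟩
  · exact Prod.ext ((hrow p hp).1.trans (hrow q hq).1.symm) hpq

theorem bsAt_le_sum (hf : IsOrComposition f g) {x : ι × κ → Bool} (hx : f x = false) :
    bsAt f x ≤ ∑ i, bsAt g (fun j => x (i, j)) := by
  refine _root_.bsAt_le f x fun b B hB hsens => ?_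
  have hrow : ∀ p, ∃ i, g (fun j => flipBlock x (B p) (i, j)) = true := fun p =>
    (hf _).1 (by simpa [hx] using hsens p)
  choose r hr using hrow
  calc b = ∑ i, (Finset.univ.filter fun p => r p = i).card := by
        rw [← Finset.card_eq_sum_card_fiberwise fun p _ => Finset.mem_univ (r p)]
        simp
    _ ≤ ∑ i, bsAt g (fun j => x (i, j)) := Finset.sum_le_sum fun i _ => by
        refine le_bsAt g _ _ (fun p => Finset.univ.filter fun j => (i, j) ∈ B p)
          (fun p _ q _ hpq => disjoint_filter_row (hB hpq) i) fun p hp => ?_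
        have hrp := hr p
        rw [(Finset.mem_filter.1 hp).2] at hrp
        rw [← flipBlock_row, hrp, (hf.eq_false_iff x).1 hx i]
        exact Bool.false_ne_true.symm

theorem card_mul_bsAt_le (hf : IsOrComposition f g) {y : κ → Bool} (hy : g y = false) :
    Fintype.card ι * bsAt g y ≤ bsAt f (fun p => y p.2) := by
  obtain ⟨B, hB, hsens⟩ := exists_sensitive_blocks_card_eq_bsAt g y
  have hfy : f (fun p => y p.2) = false := (hf.eq_false_iff _).2 fun _ => hy
  have hrow : ∀ (i : ι) p, (fun j => flipBlock (fun p : ι × κ => y p.2)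
      ((B p).image (Prod.mk i)) (i, j)) = flipBlock y (B p) := fun i p => by
    funext j; simp [flipBlock]
  have := le_bsAt f (fun p : ι × κ => y p.2) (Finset.univ : Finset (ι × Fin (bsAt g y)))
    (fun q => (B q.2).image (Prod.mk q.1)) ?_ fun q _ => ?_
  · simpa using this
  · rintro ⟨i, p⟩ - ⟨i', p'⟩ - hne
    refine Finset.disjoint_left.2 fun z hz hz' => ?_
    simp only [Finset.mem_image] at hz hz'
    obtain ⟨t, ht, rfl⟩ := hz
    obtain ⟨t', ht', h⟩ := hz'
    obtain ⟨rfl, rfl⟩ := Prod.ext_iff.1 h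
    exact Finset.disjoint_left.1 (hB fun hpp => hne (by rw [hpp])) ht' ht
  · rw [hfy, ne_eq, Bool.not_eq_false, hf]
    exact ⟨q.1, by rw [hrow]; simpa [hy] using hsens q.2⟩

theorem sens_le (hf : IsOrComposition f g) :
    sens f ≤ max (Fintype.card ι * sens0 g) (sens1 g) := Finset.sup_le fun x _ => by
  cases hx : f x
  · calc sensAt f x = ∑ i, sensAt g (fun j => x (i, j)) := hf.sensAt_eq_sum hx
      _ ≤ ∑ _i : ι, sens0 g :=
        Finset.sum_le_sum fun i _ => sensAt_le_sens0 ((hf.eq_false_iff x).1 hx i)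
      _ = Fintype.card ι * sens0 g := by simp
      _ ≤ _ := le_max_left _ _
  · obtain ⟨i, hi⟩ := (hf x).1 hx
    exact (hf.sensAt_le hi).trans ((sensAt_le_sens1 hi).trans (le_max_right _ _))

theorem bs_le (hf : IsOrComposition f g) :
    bs f ≤ max (Fintype.card ι * bs0 g) (bs g) := Finset.sup_le fun x _ => by
  cases hx : f x
  · calc bsAt f x ≤ ∑ i, bsAt g (fun j => x (i, j)) := hf.bsAt_le_sum hx
      _ ≤ ∑ _i : ι, bs0 g :=
        Finset.sum_le_sum fun i _ => bsAt_le_bs0 ((hf.eq_false_iff x).1 hx i)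
      _ = Fintype.card ι * bs0 g := by simp
      _ ≤ _ := le_max_left _ _
  · obtain ⟨i, hi⟩ := (hf x).1 hx
    exact (hf.bsAt_le hi).trans (bsAt_le_bs.trans (le_max_right _ _))

theorem card_mul_sens0_le (hf : IsOrComposition f g) : Fintype.card ι * sens0 g ≤ sens f := by
  rcases (Finset.univ.filter fun y => g y = false).eq_empty_or_nonempty with h | h
  · simp [sens0, h]
  obtain ⟨y, hy, hmax⟩ := Finset.exists_mem_eq_sup _ h (sensAt g)
  have hy : g y = false := (Finset.mem_filter.1 hy).2
  calc Fintype.card ι * sens0 g = sensAt f (fun p => y p.2) := by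
        rw [sens0, hmax, hf.sensAt_eq_sum ((hf.eq_false_iff _).2 fun _ => hy)]
        simp
    _ ≤ sens f := sensAt_le_sens

theorem card_mul_bs0_le (hf : IsOrComposition f g) : Fintype.card ι * bs0 g ≤ bs f := by
  rcases (Finset.univ.filter fun y => g y = false).eq_empty_or_nonempty with h | h
  · simp [bs0, h]
  obtain ⟨y, hy, hmax⟩ := Finset.exists_mem_eq_sup _ h (bsAt g)
  rw [bs0, hmax]
  exact (hf.card_mul_bsAt_le (Finset.mem_filter.1 hy).2).trans bsAt_le_bs

end IsOrComposition

end OrComposition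

section PatternFunction

variable {k : ℕ}

theorem pidx_eq_iff {a b : ℤ} : pidx k a = pidx k b ↔ (4*(k:ℤ)+2) ∣ b - a := by
  have hn : (0:ℤ) < 4*(k:ℤ)+2 := by positivity
  have ha := Int.emod_nonneg a hn.ne'
  have hb := Int.emod_nonneg b hn.ne'
  rw [← Int.modEq_iff_dvd, Int.ModEq, Fin.ext_iff]
  simp only [pidx]
  omega

theorem pidx_add_mul (a q : ℤ) : pidx k (a + (4*(k:ℤ)+2)*q) = pidx k a :=
  pidx_eq_iff.2 ⟨-q, by ring⟩

theorem pidx_ne {a b : ℤ} (h₁ : a < b) (h₂ : b < a + (4*(k:ℤ)+2)) : pidx k a ≠ pidx k b :=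
  fun h => by
    have := Int.eq_zero_of_abs_lt_dvd (pidx_eq_iff.1 h) (abs_lt.2 ⟨by omega, by omega⟩)
    omega

theorem eq_of_pidx_eq {a b : ℤ} (h₁ : a < b + (4*(k:ℤ)+2)) (h₂ : b < a + (4*(k:ℤ)+2))
    (h : pidx k a = pidx k b) : a = b := by
  rcases lt_trichotomy a b with hab | hab | hab
  · exact absurd h (pidx_ne hab h₂)
  · exact hab
  · exact absurd h.symm (pidx_ne hab h₁)

theorem pidx_two_mul_ne (a b : ℤ) : pidx k (2*a) ≠ pidx k (2*b-1) := fun h => by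
  obtain ⟨c, hc⟩ := pidx_eq_iff.1 h
  have : 2*b - 1 - 2*a = 2*((2*(k:ℤ)+1)*c) := by rw [hc]; ring
  omega

theorem exists_offset {d : ℤ} (hd : ¬ (2*(k:ℤ)+1) ∣ d) :
    ∃ r q : ℤ, 0 < r ∧ r ≤ 2*k ∧ d = r + (2*(k:ℤ)+1)*q := by
  have hn : (0:ℤ) < 2*(k:ℤ)+1 := by positivity
  refine ⟨d % (2*(k:ℤ)+1), d / (2*(k:ℤ)+1), ?_, ?_, by rw [Int.emod_add_mul_ediv]⟩
  · exact (Int.emod_pos_of_not_dvd hd).resolve_left hn.ne'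
  · have := Int.emod_lt_of_pos d hn; omega

theorem SatPat.even_eq_false {j j' : ℤ} {z : Fin (4*k+2) → Bool} (h : SatPat k j z)
    (hj : ¬ (2*(k:ℤ)+1) ∣ j' - j) : z (pidx k (2*j')) = false := by
  obtain ⟨r, q, hr₀, hr, hd⟩ := exists_offset hj
  rcases le_or_gt r (k:ℤ) with hrk | hrk
  · have e : 2*j' = 2*j + 2*r + (4*(k:ℤ)+2)*q := by linarith
    rw [e, pidx_add_mul]
    exact (h.2.2 r hr₀ hrk).1
  · have e : 2*j' = 2*j - 2*(2*k+1-r) + (4*(k:ℤ)+2)*(q+1) := by linarith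
    rw [e, pidx_add_mul]
    exact (h.2.2 _ (by omega) (by omega)).2.2

theorem SatPat.odd_eq_false_of_offset {j j' r q : ℤ} {z : Fin (4*k+2) → Bool}
    (h : SatPat k j z) (hd : j' - j = r + (2*(k:ℤ)+1)*q) (hkr : k < r) (hr : r ≤ 2*k) :
    z (pidx k (2*j'-1)) = false := by
  have e : 2*j'-1 = 2*j - 2*(2*k+1-r) - 1 + (4*(k:ℤ)+2)*(q+1) := by linarith
  rw [e, pidx_add_mul]
  exact (h.2.2 _ (by omega) (by omega)).2.1

theorem SatPat.odd_eq_false_or {j j' : ℤ} {z z' : Fin (4*k+2) → Bool} (h : SatPat k j z)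
    (h' : SatPat k j' z') (hj : ¬ (2*(k:ℤ)+1) ∣ j' - j) :
    z (pidx k (2*j'-1)) = false ∨ z' (pidx k (2*j-1)) = false := by
  obtain ⟨r, q, hr₀, hr, hd⟩ := exists_offset hj
  rcases lt_or_ge (k:ℤ) r with hkr | hrk
  · exact Or.inl (h.odd_eq_false_of_offset hd hkr hr)
  · exact Or.inr (h'.odd_eq_false_of_offset (r := 2*k+1-r) (q := -q-1) (by linarith)
      (by omega) (by omega))

theorem SatPat.of_flipBlock_of_disjoint {j : ℤ} {x : Fin (4*k+2) → Bool}
    {B B' : Finset (Fin (4*k+2))} (hB : Disjoint B B') (h : SatPat k j (flipBlock x B))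
    (h' : SatPat k j (flipBlock x B')) : SatPat k j x :=
  ⟨eq_of_flipBlock_eq_of_disjoint x hB h.1 h'.1, eq_of_flipBlock_eq_of_disjoint x hB h.2.1 h'.2.1,
    fun i hi₁ hi₂ => ⟨eq_of_flipBlock_eq_of_disjoint x hB (h.2.2 i hi₁ hi₂).1 (h'.2.2 i hi₁ hi₂).1,
      eq_of_flipBlock_eq_of_disjoint x hB (h.2.2 i hi₁ hi₂).2.1 (h'.2.2 i hi₁ hi₂).2.1,
      eq_of_flipBlock_eq_of_disjoint x hB (h.2.2 i hi₁ hi₂).2.2 (h'.2.2 i hi₁ hi₂).2.2⟩⟩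

theorem eq_of_satPat_flipBit {x : Fin (4*k+2) → Bool}
    (hx : ∀ j : ℤ, 1 ≤ j → j ≤ 2*(k:ℤ)+1 → ¬ SatPat k j x) {t t' : Fin (4*k+2)} {j j' : ℤ}
    (hj : 1 ≤ j ∧ j ≤ 2*(k:ℤ)+1) (hj' : 1 ≤ j' ∧ j' ≤ 2*(k:ℤ)+1)
    (h : SatPat k j (flipBit x t)) (h' : SatPat k j' (flipBit x t')) : t = t' := by
  by_contra htt
  by_cases hdvd : (2*(k:ℤ)+1) ∣ j' - j
  · obtain rfl : j = j' := by
      have := Int.eq_zero_of_abs_lt_dvd hdvd (abs_lt.2 ⟨by omega, by omega⟩)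
      omega
    refine hx j hj.1 hj.2 (SatPat.of_flipBlock_of_disjoint
      (Finset.disjoint_singleton.2 htt) ?_ ?_) <;> rwa [flipBlock_singleton]
  have hdvd' : ¬ (2*(k:ℤ)+1) ∣ j - j' := fun hd => hdvd (dvd_sub_comm.1 hd)
  -- `2j` is a one of `P_j` but a zero of `P_j'`, so it is one of the two flipped bits
  have h2j := eq_or_eq_of_flipBit_apply_ne x (i := t) (i' := t') (j := pidx k (2*j))
    (by rw [h.2.1, h'.even_eq_false hdvd']; decide)
  have h2j' := eq_or_eq_of_flipBit_apply_ne x (i := t) (i' := t') (j := pidx k (2*j'))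
    (by rw [h'.2.1, h.even_eq_false hdvd]; decide)
  have hne : pidx k (2*j) ≠ pidx k (2*j') := fun e => by
    have := h'.even_eq_false hdvd'
    rw [e, h'.2.1] at this
    exact Bool.noConfusion this
  obtain ⟨⟨a, rfl⟩, ⟨a', rfl⟩⟩ : (∃ a, t = pidx k (2*a)) ∧ ∃ a', t' = pidx k (2*a') := by
    rcases h2j with e | e <;> rcases h2j' with e' | e'
    · exact absurd (e.trans e'.symm) hne
    · exact ⟨⟨j, e.symm⟩, ⟨j', e'.symm⟩⟩
    · exact ⟨⟨j', e'.symm⟩, ⟨j, e.symm⟩⟩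
    · exact absurd (e.trans e'.symm) hne
  have hodd : ∀ b, flipBit x (pidx k (2*a)) (pidx k (2*b-1)) =
      flipBit x (pidx k (2*a')) (pidx k (2*b-1)) := fun b => by
    rw [flipBit_apply_of_ne x (pidx_two_mul_ne a b).symm,
      flipBit_apply_of_ne x (pidx_two_mul_ne a' b).symm]
  rcases h.odd_eq_false_or h' hdvd with e | e
  · rw [hodd, h'.1] at e; exact Bool.noConfusion e
  · rw [← hodd, h.1] at e; exact Bool.noConfusion e

noncomputable def patSupport (k : ℕ) (j : ℤ) : Finset (Fin (4*k+2)) :=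
  {pidx k (2*j-1), pidx k (2*j)} ∪ (Finset.Icc 1 (k:ℤ)).biUnion fun i =>
    {pidx k (2*j+2*i), pidx k (2*j-2*i-1), pidx k (2*j-2*i)}

theorem card_patSupport_le (j : ℤ) : (patSupport k j).card ≤ 3*k+2 :=
  calc (patSupport k j).card ≤ 2 + (Finset.Icc 1 (k:ℤ)).card * 3 :=
        (Finset.card_union_le _ _).trans (add_le_add Finset.card_le_two
          (Finset.card_biUnion_le_card_mul _ _ _ fun _ _ => Finset.card_le_three))
    _ = 3*k+2 := by simp; ring

theorem SatPat.of_eqOn_patSupport {j : ℤ} {y z : Fin (4*k+2) → Bool} (h : SatPat k j y)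
    (hz : ∀ p ∈ patSupport k j, z p = y p) : SatPat k j z := by
  have hmem : ∀ i, 1 ≤ i → i ≤ (k:ℤ) → ∀ p ∈ ({pidx k (2*j+2*i), pidx k (2*j-2*i-1),
      pidx k (2*j-2*i)} : Finset (Fin (4*k+2))), p ∈ patSupport k j := fun i hi₁ hi₂ _ hp =>
    Finset.mem_union_right _ (Finset.mem_biUnion.2 ⟨i, Finset.mem_Icc.2 ⟨hi₁, hi₂⟩, hp⟩)
  refine ⟨?_, ?_, fun i hi₁ hi₂ => ⟨?_, ?_, ?_⟩⟩
  · rw [hz _ (by simp [patSupport]), h.1]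
  · rw [hz _ (by simp [patSupport]), h.2.1]
  · rw [hz _ (hmem i hi₁ hi₂ _ (by simp)), (h.2.2 i hi₁ hi₂).1]
  · rw [hz _ (hmem i hi₁ hi₂ _ (by simp)), (h.2.2 i hi₁ hi₂).2.1]
  · rw [hz _ (hmem i hi₁ hi₂ _ (by simp)), (h.2.2 i hi₁ hi₂).2.2]

theorem satPat_indicator (j : ℤ) :
    SatPat k j fun p => decide (p ∈ ({pidx k (2*j-1), pidx k (2*j)} : Finset (Fin (4*k+2)))) := by
  refine ⟨by simp, by simp, fun i hi₁ hi₂ => ⟨?_, ?_, ?_⟩⟩ <;>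
    simp only [Finset.mem_insert, Finset.mem_singleton, decide_eq_false_iff_not, not_or]
  · exact ⟨(pidx_ne (by omega) (by omega)).symm, (pidx_ne (by omega) (by omega)).symm⟩
  · exact ⟨pidx_ne (by omega) (by omega), pidx_ne (by omega) (by omega)⟩
  · exact ⟨pidx_ne (by omega) (by omega), pidx_ne (by omega) (by omega)⟩

end PatternFunction

def IsPatternFunction (k : ℕ) (g : (Fin (4*k+2) → Bool) → Bool) : Prop :=
  ∀ x, g x = true ↔ ∃ j : ℤ, 1 ≤ j ∧ j ≤ 2*(k:ℤ)+1 ∧ SatPat k j x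

namespace IsPatternFunction

variable {k : ℕ} {g : (Fin (4*k+2) → Bool) → Bool}

theorem eq_false_iff (hg : IsPatternFunction k g) (x : Fin (4*k+2) → Bool) :
    g x = false ↔ ∀ j : ℤ, 1 ≤ j → j ≤ 2*(k:ℤ)+1 → ¬ SatPat k j x := by
  simp only [← Bool.not_eq_true, hg x, not_exists, not_and]

theorem sens0_le (hg : IsPatternFunction k g) : sens0 g ≤ 1 :=
  Finset.sup_le fun x hx => Finset.card_le_one.2 fun t ht t' ht' => by
    have hx := (Finset.mem_filter.1 hx).2
    have hpat : ∀ s ∈ Finset.univ.filter fun t => g (flipBit x t) ≠ g x,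
        ∃ j : ℤ, (1 ≤ j ∧ j ≤ 2*(k:ℤ)+1) ∧ SatPat k j (flipBit x s) := fun s hs => by
      obtain ⟨j, hj₁, hj₂, h⟩ := (hg _).1 (by simpa [hx] using (Finset.mem_filter.1 hs).2)
      exact ⟨j, ⟨hj₁, hj₂⟩, h⟩
    obtain ⟨j, hj, h⟩ := hpat t ht
    obtain ⟨j', hj', h'⟩ := hpat t' ht'
    exact eq_of_satPat_flipBit ((hg.eq_false_iff x).1 hx) hj hj' h h'

theorem one_le_sens0 (hg : IsPatternFunction k g) : 1 ≤ sens0 g := by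
  let x : Fin (4*k+2) → Bool := fun p => decide (p ∈ ({pidx k 2} : Finset (Fin (4*k+2))))
  have hx : g x = false := (hg.eq_false_iff x).2 fun j _ _ h =>
    pidx_two_mul_ne 1 j (Finset.mem_singleton.1 (of_decide_eq_true h.1)).symm
  have hne : pidx k 1 ≠ pidx k 2 := (pidx_two_mul_ne 1 1).symm
  have hflip : flipBit x (pidx k 1) = fun p =>
      decide (p ∈ ({pidx k (2*1-1), pidx k (2*1)} : Finset (Fin (4*k+2)))) := by
    funext p
    by_cases hp : p = pidx k 1
    · subst hp; simp [flipBit, x, hne]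
    · rw [flipBit_apply_of_ne x hp]; simp [x, hp]
  refine le_trans ?_ (sensAt_le_sens0 hx)
  refine Finset.card_pos.2 ⟨pidx k 1, Finset.mem_filter.2 ⟨Finset.mem_univ _, ?_⟩⟩
  rw [hflip, hx, ne_eq, Bool.not_eq_false, hg]
  exact ⟨1, le_rfl, by omega, satPat_indicator 1⟩

theorem bsAt_le_of_eq_true (hg : IsPatternFunction k g) {y : Fin (4*k+2) → Bool}
    (hy : g y = true) : bsAt g y ≤ 3*k+2 := by
  obtain ⟨j, hj₁, hj₂, h⟩ := (hg y).1 hy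
  refine (bsAt_le_card_of_certificate g y _ fun z hz => ?_).trans (card_patSupport_le j)
  rw [hy, hg]
  exact ⟨j, hj₁, hj₂, h.of_eqOn_patSupport hz⟩

theorem bsAt_le_of_eq_false (hg : IsPatternFunction k g) {y : Fin (4*k+2) → Bool}
    (hy : g y = false) : bsAt g y ≤ 2*k+1 := by
  refine bsAt_le g y fun b B hB hsens => ?_
  have hpat : ∀ p, ∃ j ∈ Finset.Icc 1 (2*(k:ℤ)+1), SatPat k j (flipBlock y (B p)) := fun p => by
    obtain ⟨j, hj₁, hj₂, h⟩ := (hg _).1 (by simpa [hy] using hsens p)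
    exact ⟨j, Finset.mem_Icc.2 ⟨hj₁, hj₂⟩, h⟩
  choose j hj hpj using hpat
  have hinj : Function.Injective fun p => (⟨j p, hj p⟩ : Finset.Icc 1 (2*(k:ℤ)+1)) :=
    fun p q hpq => by
      by_contra hne
      have hjpq : j p = j q := congrArg Subtype.val hpq
      exact (hg.eq_false_iff y).1 hy (j p) (Finset.mem_Icc.1 (hj p)).1 (Finset.mem_Icc.1 (hj p)).2
        (SatPat.of_flipBlock_of_disjoint (hB hne) (hpj p) (hjpq ▸ hpj q))
  have := Fintype.card_le_of_injective _ hinj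
  simp only [Fintype.card_fin, Fintype.card_coe, Int.card_Icc] at this
  omega

theorem sens1_le (hg : IsPatternFunction k g) : sens1 g ≤ 3*k+2 :=
  Finset.sup_le fun y hy =>
    (sensAt_le_bsAt g y).trans (hg.bsAt_le_of_eq_true (Finset.mem_filter.1 hy).2)

theorem bs0_le (hg : IsPatternFunction k g) : bs0 g ≤ 2*k+1 :=
  Finset.sup_le fun _ hy => hg.bsAt_le_of_eq_false (Finset.mem_filter.1 hy).2

theorem bs_le (hg : IsPatternFunction k g) : bs g ≤ 3*k+2 :=
  Finset.sup_le fun y _ => by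
    cases hy : g y
    · exact (hg.bsAt_le_of_eq_false hy).trans (by omega)
    · exact hg.bsAt_le_of_eq_true hy

theorem le_bs0 (hg : IsPatternFunction k g) : 2*k+1 ≤ bs0 g := by
  have hy : g (fun _ => false) = false :=
    (hg.eq_false_iff _).2 fun j _ _ h => Bool.noConfusion h.1
  refine le_trans ?_ (bsAt_le_bs0 hy)
  have := le_bsAt g (fun _ => false) (Finset.Icc 1 (2*(k:ℤ)+1))
    (fun j => {pidx k (2*j-1), pidx k (2*j)}) ?_ fun j hj => ?_
  · simp only [Int.card_Icc] at this
    omega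
  · intro j hj j' hj' hne
    simp only [Finset.coe_Icc, Set.mem_Icc] at hj hj'
    refine Finset.disjoint_left.2 fun p hp hp' => ?_
    simp only [Finset.mem_insert, Finset.mem_singleton] at hp hp'
    rcases hp with rfl | rfl <;> rcases hp' with h | h
    · exact hne (by have := eq_of_pidx_eq (by omega) (by omega) h; omega)
    · exact pidx_two_mul_ne _ _ h.symm
    · exact pidx_two_mul_ne _ _ h
    · exact hne (by have := eq_of_pidx_eq (by omega) (by omega) h; omega)
  · obtain ⟨hj₁, hj₂⟩ := Finset.mem_Icc.1 hj
    rw [hy, ne_eq, Bool.not_eq_false, hg]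
    exact ⟨j, hj₁, hj₂, by rw [flipBlock_false]; exact satPat_indicator j⟩

end IsPatternFunction

theorem sens_bs_composed_pattern_function_general (k : ℕ)
    (g : (Fin (4*k+2) → Bool) → Bool)
    (hg : ∀ x, g x = true ↔ ∃ j : ℤ, 1 ≤ j ∧ j ≤ 2*(k:ℤ)+1 ∧ SatPat k j x)
    (f : (Fin (3*k+2) × Fin (4*k+2) → Bool) → Bool)
    (hf : ∀ x : Fin (3*k+2) × Fin (4*k+2) → Bool,
      f x = true ↔ ∃ i : Fin (3*k+2), g (fun j => x (i, j)) = true) :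
    sens f = 3*k+2 ∧ bs f = (3*k+2)*(2*k+1) := by
  have hf : IsOrComposition f g := hf
  have hg : IsPatternFunction k g := hg
  have hsens0 : sens0 g = 1 := le_antisymm hg.sens0_le hg.one_le_sens0
  have hbs0 : bs0 g = 2*k+1 := le_antisymm hg.bs0_le hg.le_bs0
  have hcard : Fintype.card (Fin (3*k+2)) = 3*k+2 := Fintype.card_fin _
  refine ⟨le_antisymm ?_ ?_, le_antisymm ?_ ?_⟩
  · simpa [hsens0, hcard] using hf.sens_le.trans (max_le_max le_rfl hg.sens1_le)
  · simpa [hsens0, hcard] using hf.card_mul_sens0_le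
  · refine hf.bs_le.trans (max_le (by rw [hbs0, hcard]) (hg.bs_le.trans ?_))
    exact Nat.le_mul_of_pos_right _ (by omega)
  · simpa [hbs0, hcard] using hf.card_mul_bs0_le

/-- For `k ≥ 1`, the function `f` on `(3k+2)(4k+2)` variables obtained by taking the
OR of the pattern function `g` on `3k+2` disjoint blocks of `4k+2` variables has
sensitivity `s(f) = 3k+2` and block sensitivity `bs(f) = (3k+2)(2k+1)`. -/
theorem sens_bs_composed_pattern_function (k : ℕ) (hk : 1 ≤ k)
    (g : (Fin (4*k+2) → Bool) → Bool)
    (hg : ∀ x, g x = true ↔ ∃ j : ℤ, 1 ≤ j ∧ j ≤ 2*(k:ℤ)+1 ∧ SatPat k j x)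
    (f : (Fin (3*k+2) × Fin (4*k+2) → Bool) → Bool)
    (hf : ∀ x : Fin (3*k+2) × Fin (4*k+2) → Bool,
      f x = true ↔ ∃ i : Fin (3*k+2), g (fun j => x (i, j)) = true) :
    sens f = 3*k+2 ∧ bs f = (3*k+2)*(2*k+1) :=
  sens_bs_composed_pattern_function_general k g hg f hf
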